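/- arXiv:2511.07378 — 3 statements merged into one kernel-verified Lean document; each statement's English description precedes it below -/
import Mathlib

section
/- Let n ≥ 2 and let a : G → ℝ and b : Y → ℝ be functions on finite sets G and Y each of cardinality n. Fix g ∈ G and y ∈ Y, and suppose: (i) |a(g) + b(y')| ≤ δ for all y' ≠ y; (ii) |a(g') + b(y)| ≤ δ for all g' ≠ g; (iii) ∑_{g' ∈ G} a(g') = ∑_{y' ∈ Y} b(y'). Then |a(g) − b(y)| ≤ 2δ. -/
/-!
Summing the `n - 1` cancellation conditions through `a g` and the `n - 1` through `b y` gives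
`(n - 1) a g + ∑ b - b y` and `(n - 1) b y + ∑ a - a g`, each of absolute value at most `(n - 1) δ`.
Since `∑ a = ∑ b`, their difference is `n (a g - b y)`, so `n |a g - b y| ≤ 2 n δ`.
-/

open Finset

theorem Finset.abs_sum_le_card_mul {ι : Type*} {s : Finset ι} {f : ι → ℝ} {δ : ℝ}
    (h : ∀ i ∈ s, |f i| ≤ δ) : |∑ i ∈ s, f i| ≤ #s * δ := by
  rw [← nsmul_eq_mul]
  exact (abs_sum_le_sum_abs f s).trans (sum_le_card_nsmul s _ δ h)

theorem Finset.sum_univ_erase_const_add {ι : Type*} [Fintype ι] [DecidableEq ι] (i : ι) (c : ℝ)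
    (f : ι → ℝ) :
    ∑ j ∈ univ.erase i, (c + f j) = Fintype.card ι * c + ∑ j, f j - (c + f i) := by
  rw [sum_erase_eq_sub (mem_univ i), sum_add_distrib, sum_const, card_univ, nsmul_eq_mul]

theorem stmt_4_general {G Y : Type*} [Fintype G] [Fintype Y] (n : ℕ)
    (hG : Fintype.card G = n) (hY : Fintype.card Y = n)
    (a : G → ℝ) (b : Y → ℝ) (g : G) (y : Y) (δ : ℝ) (hδ : 0 ≤ δ)
    (h1 : ∀ y' : Y, y' ≠ y → |a g + b y'| ≤ δ)
    (h2 : ∀ g' : G, g' ≠ g → |a g' + b y| ≤ δ)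
    (h3 : ∑ g' : G, a g' = ∑ y' : Y, b y') :
    |a g - b y| ≤ 2 * δ := by
  classical
  set A := ∑ y' ∈ univ.erase y, (a g + b y')
  set B := ∑ g' ∈ univ.erase g, (b y + a g')
  have hA : |A| ≤ n * δ := by
    refine (abs_sum_le_card_mul fun y' hy' ↦ h1 y' (ne_of_mem_erase hy')).trans ?_
    gcongr
    exact hY ▸ card_le_univ _
  have hB : |B| ≤ n * δ := by
    refine (abs_sum_le_card_mul (δ := δ) fun g' hg' ↦ ?_).trans ?_
    · rw [add_comm]
      exact h2 g' (ne_of_mem_erase hg')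
    gcongr
    exact hG ▸ card_le_univ _
  have hAB : A - B = n * (a g - b y) := by
    simp only [A, B]
    rw [sum_univ_erase_const_add, sum_univ_erase_const_add, hG, hY, h3]
    ring
  have hn : (0 : ℝ) < n := by
    rw [← hG]
    exact_mod_cast Fintype.card_pos_iff.mpr ⟨g⟩
  have hscaled : n * |a g - b y| ≤ n * (2 * δ) := by
    calc n * |a g - b y| = |A - B| := by rw [hAB, abs_mul, Nat.abs_cast]
      _ ≤ |A| + |B| := abs_sub _ _
      _ ≤ n * (2 * δ) := by linarith
  exact le_of_mul_le_mul_left hscaled hn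

/-- Symmetry-of-features identity, simply transitive case: if the cancellation
conditions hold with error `δ` and the total sums of `a` and `b` agree, then
the two target feature magnitudes are within `2δ` of each other. -/
theorem stmt_4 {G Y : Type*} [Fintype G] [Fintype Y] (n : ℕ) (hn : 2 ≤ n)
    (hG : Fintype.card G = n) (hY : Fintype.card Y = n)
    (a : G → ℝ) (b : Y → ℝ) (g : G) (y : Y) (δ : ℝ) (hδ : 0 ≤ δ)
    (h1 : ∀ y' : Y, y' ≠ y → |a g + b y'| ≤ δ)
    (h2 : ∀ g' : G, g' ≠ g → |a g' + b y| ≤ δ)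
    (h3 : ∑ g' : G, a g' = ∑ y' : Y, b y') :
    |a g - b y| ≤ 2 * δ :=
  stmt_4_general n hG hY a b g y δ hδ h1 h2 h3
end

section
/- Let q ≥ 3 be an integer, η ∈ (0, 1), and let (x_t)_{t ≥ 0} be a positive real sequence satisfying x_{t+1} = x_t + η C_t x_t^{q−1} with c ≤ C_t ≤ C for positive constants c ≤ C. Then for every A > x_0, the first time T with x_T ≥ A satisfies T ≤ (1/(η c)) · ( D / x_0^{q−2} ) for some constant D depending only on q and the ratio C/c (assuming η C A^{q-2} ≤ 1/2); i.e., the escape time scales as Θ(1/(η x_0^{q−2})). -/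
/-!
With `m = q - 2`, the recursion reads `x_{t+1} = x_t (1 + u_t)` where `u_t = η C_t x_t^m`.
Below the level `A` the step-size condition gives `u_t ≤ 1/2`, and then the potential
`x_t^{-m}` drops by at least `(2/3) η c` per step, because `(1 + u)^m ≥ 1 + u` and
`1 / (1 + u) ≤ 1 - (2/3) u` on `[0, 1/2]`. A nonnegative potential can only drop by a fixed
amount `x_0^{-m} / ((2/3) η c)` times, which bounds the escape time with `D = 3/2`.
-/

lemma one_le_one_sub_mul_mul_one_add {u : ℝ} (hu₀ : 0 ≤ u) (hu : u ≤ 1 / 2) :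
    1 ≤ (1 - 2 / 3 * u) * (1 + u) := by
  nlinarith

lemma one_div_mul_one_add_pow_le {m : ℕ} (hm : 1 ≤ m) {x a b : ℝ} (hx : 0 < x) (ha : 0 ≤ a)
    (hab : a ≤ b) (hb : b * x ^ m ≤ 1 / 2) :
    1 / (x * (1 + b * x ^ m)) ^ m ≤ 1 / x ^ m - 2 / 3 * a := by
  set u := b * x ^ m
  have hxm : 0 < x ^ m := pow_pos hx m
  have hau : a * x ^ m ≤ u := mul_le_mul_of_nonneg_right hab hxm.le
  have hau₀ : 0 ≤ a * x ^ m := by positivity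
  have hgrowth : 1 + a * x ^ m ≤ (1 + u) ^ m :=
    calc 1 + a * x ^ m ≤ 1 + u := by linarith
      _ ≤ (1 + u) ^ m := le_self_pow₀ (by linarith) (by omega)
  have hkey := one_le_one_sub_mul_mul_one_add hau₀ (hau.trans hb)
  have hu₀ : 0 ≤ u := hau₀.trans hau
  rw [mul_pow, div_le_iff₀ (by positivity)]
  calc 1 ≤ (1 - 2 / 3 * (a * x ^ m)) * (1 + a * x ^ m) := hkey
    _ ≤ (1 - 2 / 3 * (a * x ^ m)) * (1 + u) ^ m :=
        mul_le_mul_of_nonneg_left hgrowth (by linarith)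
    _ = (1 / x ^ m - 2 / 3 * a) * (x ^ m * (1 + u) ^ m) := by field_simp

lemma le_sub_nat_mul_of_forall_lt {P : ℕ → Prop} {y : ℕ → ℝ} {δ : ℝ}
    (hstep : ∀ t, P t → y (t + 1) ≤ y t - δ) {n : ℕ} (hP : ∀ s < n, P s) :
    y n ≤ y 0 - n * δ := by
  induction n with
  | zero => simp
  | succ n ih =>
    have hprev := ih fun s hs => hP s (by omega)
    have hlast := hstep n (hP n (by omega))
    push_cast
    linarith

lemma exists_not_and_nat_mul_le {P : ℕ → Prop} {y : ℕ → ℝ} {δ : ℝ} (hδ : 0 < δ)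
    (hy : ∀ t, 0 ≤ y t) (hstep : ∀ t, P t → y (t + 1) ≤ y t - δ) :
    ∃ T : ℕ, ¬ P T ∧ T * δ ≤ y 0 := by
  classical
  have hexists : ∃ T, ¬ P T := by
    by_contra! hall
    obtain ⟨N, hN⟩ := exists_nat_gt (y 0 / δ)
    have hdrop := le_sub_nat_mul_of_forall_lt hstep (n := N) fun s _ => hall s
    rw [div_lt_iff₀ hδ] at hN
    linarith [hy N]
  refine ⟨Nat.find hexists, Nat.find_spec hexists, ?_⟩
  have hdrop := le_sub_nat_mul_of_forall_lt hstep fun s hs => not_not.1 (Nat.find_min hexists hs)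
  linarith [hy (Nat.find hexists)]

theorem stmt_10_general (q : ℕ) (hq : 3 ≤ q) (r : ℝ) :
    ∃ D : ℝ, 0 < D ∧
      ∀ (c C : ℝ), 0 < c → C = r * c →
      ∀ (η : ℝ), 0 < η → η < 1 →
      ∀ (Ct : ℕ → ℝ), (∀ t, c ≤ Ct t ∧ Ct t ≤ C) →
      ∀ (x : ℕ → ℝ), (∀ t, 0 < x t) →
      (∀ t, x (t + 1) = x t + η * Ct t * x t ^ (q - 1)) →
      ∀ A : ℝ, x 0 < A → η * C * A ^ (q - 2) ≤ 1 / 2 →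
      ∃ T : ℕ, A ≤ x T ∧ (T : ℝ) ≤ (1 / (η * c)) * (D / x 0 ^ (q - 2)) := by
  refine ⟨3 / 2, by norm_num, ?_⟩
  intro c C hc _ η hη _ Ct hCt x hx hrec A _ hstep
  set m := q - 2
  have hδ : 0 < 2 / 3 * (η * c) := by positivity
  have hdrop : ∀ t, x t < A → 1 / x (t + 1) ^ m ≤ 1 / x t ^ m - 2 / 3 * (η * c) := by
    intro t hxA
    have hmul : x (t + 1) = x t * (1 + η * Ct t * x t ^ m) := by
      rw [hrec t, show q - 1 = m + 1 by omega, pow_succ]; ring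
    have hsmall : η * Ct t * x t ^ m ≤ 1 / 2 :=
      calc η * Ct t * x t ^ m ≤ η * C * A ^ m := by
            have hC : 0 ≤ C := hc.le.trans ((hCt t).1.trans (hCt t).2)
            have hxt := (hx t).le
            gcongr
            exact (hCt t).2
        _ ≤ 1 / 2 := hstep
    rw [hmul]
    exact one_div_mul_one_add_pow_le (by omega) (hx t) (by positivity)
      (mul_le_mul_of_nonneg_left (hCt t).1 hη.le) hsmall
  obtain ⟨T, hT, hTle⟩ :=
    exists_not_and_nat_mul_le hδ (fun t => (one_div_pos.2 (pow_pos (hx t) m)).le) hdrop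
  refine ⟨T, not_lt.1 hT, ?_⟩
  rw [show 1 / (η * c) * (3 / 2 / x 0 ^ m) = 1 / x 0 ^ m / (2 / 3 * (η * c)) by
    field_simp]
  rwa [le_div_iff₀ hδ]

/-- Tensor power method growth-time estimate: for `q ≥ 3` and growth-rate
ratio `r = C/c`, there is a constant `D` (depending only on `q` and `r`)
such that any positive sequence with `x_{t+1} = x_t + η C_t x_t^{q−1}`,
`c ≤ C_t ≤ C = r·c`, reaches any level `A > x_0` (for step sizes with
`η C A^{q−2} ≤ 1/2`) within `(1/(ηc)) · D / x_0^{q−2}` steps. -/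
theorem stmt_10 (q : ℕ) (hq : 3 ≤ q) (r : ℝ) (hr : 1 ≤ r) :
    ∃ D : ℝ, 0 < D ∧
      ∀ (c C : ℝ), 0 < c → C = r * c →
      ∀ (η : ℝ), 0 < η → η < 1 →
      ∀ (Ct : ℕ → ℝ), (∀ t, c ≤ Ct t ∧ Ct t ≤ C) →
      ∀ (x : ℕ → ℝ), (∀ t, 0 < x t) →
      (∀ t, x (t + 1) = x t + η * Ct t * x t ^ (q - 1)) →
      ∀ A : ℝ, x 0 < A → η * C * A ^ (q - 2) ≤ 1 / 2 →
      ∃ T : ℕ, A ≤ x T ∧ (T : ℝ) ≤ (1 / (η * c)) * (D / x 0 ^ (q - 2)) :=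
  stmt_10_general q hq r
end

section
/- Let q ≥ 3 be a constant integer, let x_0, y_0 > 0, A > 0 with x_0, y_0 ≤ A, and let S ≥ 1 and ε > 0. Suppose two positive sequences update as x_{t+1} = x_t + η C_t x_t^{q−1} and y_{t+1} = y_t + η S C_t y_t^{q−1}, with C_t ∈ [c, C], 0 < c ≤ C constants, and η sufficiently small. If x_0 ≥ y_0 · S^{1/(q−2)} · (1 + ε), then at the first time T_x at which x_t ≥ A, it holds that y_{T_x} ≤ K(ε, q, C/c) · y_0 for a constant K depending only on ε, q, and C/c. -/
set_option maxHeartbeats 1000000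

lemma bern_low (p : ℕ) (u : ℝ) (hu : 0 ≤ u) : (1 - p*u) * (1+u)^p ≤ 1 := by
  induction p with
  | zero => simp
  | succ n ih =>
    have h1 : (0:ℝ) ≤ (1+u)^n := by positivity
    have e : (1 - ((n:ℝ)+1)*u) * (1+u)^(n+1)
        = (1 - n*u)*(1+u)^n - ((n:ℝ)+1)*u^2*(1+u)^n := by ring
    push_cast
    rw [e]
    nlinarith [sq_nonneg u, mul_nonneg (mul_nonneg (by positivity : (0:ℝ) ≤ ((n:ℝ)+1)) (sq_nonneg u)) h1]

lemma bern_high (p : ℕ) (u : ℝ) (hu : 0 ≤ u) :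
    1 ≤ (1 - p*u + (p*(p+1)/2)*u^2) * (1+u)^p := by
  induction p with
  | zero => simp
  | succ n ih =>
    have h1 : (0:ℝ) ≤ (1+u)^n := by positivity
    have e : (1 - ((n:ℝ)+1)*u + (((n:ℝ)+1)*((n:ℝ)+1+1)/2)*u^2) * (1+u)^(n+1)
        = (1 - (n:ℝ)*u + ((n:ℝ)*((n:ℝ)+1)/2)*u^2) * (1+u)^n
          + (((n:ℝ)+1)*((n:ℝ)+1+1)/2)*u^3*(1+u)^n := by ring
    push_cast
    rw [e]
    nlinarith [mul_nonneg (mul_nonneg (by positivity : (0:ℝ) ≤ ((n:ℝ)+1)*((n:ℝ)+1+1)/2) (by positivity : (0:ℝ) ≤ u^3)) h1]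

lemma step_lower (p : ℕ) (a w : ℝ) (ha : 0 < a) (hw : 0 ≤ w) :
    (a⁻¹)^p - p*w ≤ ((a*(1 + w*a^p))⁻¹)^p := by
  set u := w * a^p with hu
  have hu0 : 0 ≤ u := by positivity
  have h1u : (0:ℝ) < 1 + u := by linarith
  have hainv : (0:ℝ) < (a⁻¹)^p := by positivity
  have key : 1 - p*u ≤ ((1+u)^p)⁻¹ := by
    rw [← one_div, le_div_iff₀ (by positivity)]
    exact bern_low p u hu0
  have e1 : ((a*(1+u))⁻¹)^p = (a⁻¹)^p * ((1+u)^p)⁻¹ := by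
    rw [mul_inv, mul_pow, inv_pow, inv_pow]
  have e2 : (a⁻¹)^p * u = w := by
    rw [hu, inv_pow]; field_simp
  rw [e1]
  calc (a⁻¹)^p - p*w = (a⁻¹)^p * (1 - p*u) := by linear_combination (p:ℝ) * e2
    _ ≤ (a⁻¹)^p * ((1+u)^p)⁻¹ := by gcongr

lemma step_upper (p : ℕ) (a w : ℝ) (ha : 0 < a) (hw : 0 ≤ w) :
    ((a*(1 + w*a^p))⁻¹)^p ≤ (a⁻¹)^p - p*w + (p*(p+1)/2)*w^2*a^p := by
  set u := w * a^p with hu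
  have hu0 : 0 ≤ u := by positivity
  have h1u : (0:ℝ) < 1 + u := by linarith
  have hainv : (0:ℝ) < (a⁻¹)^p := by positivity
  have key : ((1+u)^p)⁻¹ ≤ 1 - p*u + (p*(p+1)/2)*u^2 := by
    rw [← one_div, div_le_iff₀ (by positivity)]
    exact bern_high p u hu0
  have e1 : ((a*(1+u))⁻¹)^p = (a⁻¹)^p * ((1+u)^p)⁻¹ := by
    rw [mul_inv, mul_pow, inv_pow, inv_pow]
  have e2 : (a⁻¹)^p * u = w := by
    rw [hu, inv_pow]; field_simp
  have e3 : (a⁻¹)^p * u^2 = w^2 * a^p := by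
    rw [hu, inv_pow]; field_simp
  rw [e1]
  calc (a⁻¹)^p * ((1+u)^p)⁻¹ ≤ (a⁻¹)^p * (1 - p*u + (p*(p+1)/2)*u^2) := by gcongr
    _ = (a⁻¹)^p - p*w + (p*(p+1)/2)*w^2*a^p := by
        linear_combination (-(p:ℝ))*e2 + ((p:ℝ)*((p:ℝ)+1)/2)*e3

/-- Tensor-power-method comparison: for `q ≥ 3`, head-start factor `1 + ε`,
and rate ratio `r = C/c`, there is a constant `K = K(ε, q, r)` such that if
`x_{t+1} = x_t + η C_t x_t^{q−1}` and `y_{t+1} = y_t + η S C_t y_t^{q−1}`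
(`S ≥ 1`, `c ≤ C_t ≤ C`, `η` sufficiently small) start with
`x_0 ≥ y_0 S^{1/(q−2)} (1+ε)`, then at the first time `T` with `x_T ≥ A`
we have `y_T ≤ K · y_0`. -/
theorem stmt_11 (q : ℕ) (hq : 3 ≤ q) (ε r : ℝ) (hε : 0 < ε) (hr : 1 ≤ r) :
    ∃ K : ℝ, 0 < K ∧
      ∀ (c C : ℝ), 0 < c → C = r * c →
      ∀ (A x0 y0 S : ℝ), 0 < A → 0 < x0 → 0 < y0 → x0 ≤ A → y0 ≤ A → 1 ≤ S →
      x0 ≥ y0 * S ^ ((1 : ℝ) / ((q : ℝ) - 2)) * (1 + ε) →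
      ∃ η0 : ℝ, 0 < η0 ∧
        ∀ (η : ℝ), 0 < η → η ≤ η0 →
        ∀ (Ct : ℕ → ℝ), (∀ t, c ≤ Ct t ∧ Ct t ≤ C) →
        ∀ (x y : ℕ → ℝ), x 0 = x0 → y 0 = y0 →
        (∀ t, x (t + 1) = x t + η * Ct t * x t ^ (q - 1)) →
        (∀ t, y (t + 1) = y t + η * S * Ct t * y t ^ (q - 1)) →
        ∀ T : ℕ, (∀ t < T, x t < A) → A ≤ x T →
        y T ≤ K * y 0 := by
  obtain ⟨p, rfl⟩ : ∃ p, q = p + 2 := ⟨q - 2, by omega⟩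
  have hp1 : 1 ≤ p := by omega
  have hp0 : (0:ℝ) < p := by exact_mod_cast hp1
  have hε1 : (1:ℝ) < 1 + ε := by linarith
  set m : ℝ := ((1+ε)⁻¹)^p with hm
  have hm0 : 0 < m := by positivity
  have hm1 : m < 1 := by
    have h1 : (1+ε)⁻¹ < 1 := by
      rw [inv_lt_one_iff₀]; right; exact hε1
    exact pow_lt_one₀ (by positivity) h1 (by omega)
  set δ : ℝ := (1 - m)/2 with hδ
  have hδ0 : 0 < δ := by simp only [hδ]; linarith
  have hδhalf : δ ≤ 1/2 := by simp only [hδ]; linarith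
  refine ⟨1/δ, by positivity, ?_⟩
  intro c C hc hCr A x0 y0 S hA hx0 hy0 hx0A hy0A hS hhead
  have hr0 : (0:ℝ) < r := by linarith
  have hC : 0 < C := by rw [hCr]; positivity
  set Φ0 : ℝ := (x0⁻¹)^p with hΦ0def
  set Ψ0 : ℝ := (y0⁻¹)^p with hΨ0def
  have hΦ0 : 0 < Φ0 := by positivity
  have hΨ0 : 0 < Ψ0 := by positivity
  have hS0 : (0:ℝ) < S := by linarith
  refine ⟨min (c/(((p:ℝ)+1)*C^2*A^p)) (δ*Ψ0*c/(S*Φ0*(((p:ℝ)+1)*C^2*A^p))),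
    by positivity, ?_⟩
  intro η hη hηle Ct hCt x y hxinit hyinit hxr hyr T hT hxT
  have hCt0 : ∀ t, 0 < Ct t := fun t => lt_of_lt_of_le hc (hCt t).1
  -- positivity of sequences
  have hxpos : ∀ t, 0 < x t := by
    intro t; induction t with
    | zero => rw [hxinit]; exact hx0
    | succ n ih =>
      rw [hxr n]
      have h1 := hCt0 n
      have : p + 2 - 1 = p + 1 := rfl
      rw [this]; positivity
  have hypos : ∀ t, 0 < y t := by
    intro t; induction t with
    | zero => rw [hyinit]; exact hy0
    | succ n ih =>
      rw [hyr n]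
      have h1 := hCt0 n
      have : p + 2 - 1 = p + 1 := rfl
      rw [this]; positivity
  -- multiplicative forms of the step
  have hxform : ∀ t, x (t+1) = x t * (1 + (η * Ct t) * (x t)^p) := by
    intro t
    have e : p + 2 - 1 = p + 1 := rfl
    rw [hxr t, e]; ring
  have hyform : ∀ t, y (t+1) = y t * (1 + (η * (S * Ct t)) * (y t)^p) := by
    intro t
    have e : p + 2 - 1 = p + 1 := rfl
    rw [hyr t, e]; ring
  set E : ℝ := ((p:ℝ)*((p:ℝ)+1)/2)*(η*C)^2*A^p with hE
  have hE0 : 0 ≤ E := by positivity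
  -- per-step bounds
  have hΨstep : ∀ t, ((y t)⁻¹)^p - (p:ℝ)*(η*(S*Ct t)) ≤ ((y (t+1))⁻¹)^p := by
    intro t
    have h := step_lower p (y t) (η*(S*Ct t)) (hypos t)
      (by have := (hCt0 t); positivity)
    rw [← hyform t] at h
    exact h
  have hΦstep : ∀ t, t < T → ((x (t+1))⁻¹)^p ≤ ((x t)⁻¹)^p - (p:ℝ)*(η*Ct t) + E := by
    intro t ht
    have hxA : x t ≤ A := (hT t ht).le
    have h := step_upper p (x t) (η*Ct t) (hxpos t)
      (by have := (hCt0 t); positivity)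
    rw [← hxform t] at h
    refine h.trans ?_
    have hb : (η*Ct t)^2*(x t)^p ≤ (η*C)^2*A^p := by
      have h0 : η*Ct t ≤ η*C := mul_le_mul_of_nonneg_left (hCt t).2 hη.le
      have h1 : (η*Ct t)^2 ≤ (η*C)^2 := by
        have hnn : (0:ℝ) ≤ η*Ct t := by have := hCt0 t; positivity
        exact pow_le_pow_left₀ hnn h0 2
      have h2 : (x t)^p ≤ A^p := pow_le_pow_left₀ (hxpos t).le hxA p
      exact mul_le_mul h1 h2 (pow_nonneg (hxpos t).le p) (by positivity)
    have h4 : ((p:ℝ)*((p:ℝ)+1)/2)*(η*Ct t)^2*(x t)^p ≤ E := by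
      rw [hE, mul_assoc, mul_assoc]
      have hcp : (0:ℝ) ≤ (p:ℝ)*((p:ℝ)+1)/2 := by positivity
      exact mul_le_mul_of_nonneg_left hb hcp
    linarith only [h4]
  -- summed bounds
  have hsum1 : ∀ n, n ≤ T →
      (∑ t ∈ Finset.range n, ((p:ℝ)*(η*Ct t) - E)) ≤ ((x 0)⁻¹)^p - ((x n)⁻¹)^p := by
    intro n
    induction n with
    | zero => intro _; simp
    | succ k ih =>
      intro hk
      have h1 := ih (by omega)
      have h2 := hΦstep k (by omega)
      rw [Finset.sum_range_succ]
      linarith only [h1, h2]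
  have hsum2 : ∀ n, ((y 0)⁻¹)^p - (∑ t ∈ Finset.range n, (p:ℝ)*(η*(S*Ct t)))
      ≤ ((y n)⁻¹)^p := by
    intro n
    induction n with
    | zero => simp
    | succ k ih =>
      have h2 := hΨstep k
      rw [Finset.sum_range_succ]
      linarith only [ih, h2]
  set B : ℝ := ∑ t ∈ Finset.range T, Ct t with hB
  have hs1 : ∑ t ∈ Finset.range T, ((p:ℝ)*(η*Ct t) - E) = (p:ℝ)*η*B - (T:ℝ)*E := by
    rw [Finset.sum_sub_distrib, Finset.sum_const, Finset.card_range, nsmul_eq_mul, hB,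
      Finset.mul_sum]
    congr 1
    exact Finset.sum_congr rfl (fun t _ => by ring)
  have hs2 : ∑ t ∈ Finset.range T, (p:ℝ)*(η*(S*Ct t)) = (p:ℝ)*η*S*B := by
    rw [hB, Finset.mul_sum]
    exact Finset.sum_congr rfl (fun t _ => by ring)
  have hBc : (T:ℝ)*c ≤ B := by
    rw [hB]
    calc (T:ℝ)*c = ∑ _t ∈ Finset.range T, c := by
          rw [Finset.sum_const, Finset.card_range, nsmul_eq_mul]
      _ ≤ ∑ t ∈ Finset.range T, Ct t := Finset.sum_le_sum (fun t _ => (hCt t).1)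
  have hΦT : (0:ℝ) < ((x T)⁻¹)^p := by have := hxpos T; positivity
  have hΦ00 : ((x 0)⁻¹)^p = Φ0 := by rw [hxinit]
  have hΨ00 : ((y 0)⁻¹)^p = Ψ0 := by rw [hyinit]
  -- key inequality 1 : p η B ≤ Φ0 + T E
  have key1 : (p:ℝ)*η*B - (T:ℝ)*E ≤ Φ0 := by
    have := hsum1 T le_rfl
    rw [hs1, hΦ00] at this
    linarith only [this, hΦT]
  -- E ≤ p η c / 2
  have hηa : η*(((p:ℝ)+1)*C^2*A^p) ≤ c := by
    have h1 : η ≤ c/(((p:ℝ)+1)*C^2*A^p) := le_trans hηle (min_le_left _ _)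
    rw [le_div_iff₀ (by positivity)] at h1
    exact h1
  have hEb : E ≤ (p:ℝ)*η*c/2 := by
    have e : E = ((p:ℝ)*η/2)*(η*(((p:ℝ)+1)*C^2*A^p)) := by rw [hE]; ring
    rw [e]
    calc ((p:ℝ)*η/2)*(η*(((p:ℝ)+1)*C^2*A^p)) ≤ ((p:ℝ)*η/2)*c :=
          mul_le_mul_of_nonneg_left hηa (by positivity)
      _ = (p:ℝ)*η*c/2 := by ring
  -- T bound
  have hT2 : (T:ℝ)*((p:ℝ)*η*c/2) ≤ Φ0 := by
    have h1 : (p:ℝ)*η*((T:ℝ)*c) ≤ (p:ℝ)*η*B :=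
      mul_le_mul_of_nonneg_left hBc (by positivity)
    have h2 : (T:ℝ)*E ≤ (T:ℝ)*((p:ℝ)*η*c/2) :=
      mul_le_mul_of_nonneg_left hEb (by positivity)
    linarith only [key1, h1, h2]
  -- S T E ≤ δ Ψ0
  have hG : S*Φ0*(η*(((p:ℝ)+1)*C^2*A^p)) ≤ δ*Ψ0*c := by
    have h1 : η ≤ δ*Ψ0*c/(S*Φ0*(((p:ℝ)+1)*C^2*A^p)) := le_trans hηle (min_le_right _ _)
    rw [le_div_iff₀ (by positivity)] at h1
    linarith only [h1]
  have hSTE : S*((T:ℝ)*E) ≤ δ*Ψ0 := by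
    have e : S*((T:ℝ)*E)*c = S*((T:ℝ)*((p:ℝ)*η*c/2))*(η*(((p:ℝ)+1)*C^2*A^p)) := by
      rw [hE]; ring
    have h1 : S*((T:ℝ)*((p:ℝ)*η*c/2))*(η*(((p:ℝ)+1)*C^2*A^p))
        ≤ S*Φ0*(η*(((p:ℝ)+1)*C^2*A^p)) := by
      have := mul_le_mul_of_nonneg_left hT2 hS0.le
      exact mul_le_mul_of_nonneg_right this (by positivity)
    have h2 : S*((T:ℝ)*E)*c ≤ (δ*Ψ0)*c := by
      rw [e]; exact h1.trans hG
    exact le_of_mul_le_mul_right h2 hc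
  -- head start : S Φ0 ≤ m Ψ0
  have hcast : ((p+2:ℕ):ℝ) - 2 = (p:ℝ) := by push_cast; ring
  rw [hcast] at hhead
  set z : ℝ := S ^ ((1:ℝ)/(p:ℝ)) with hz
  have hz0 : 0 < z := Real.rpow_pos_of_pos hS0 _
  have hzp : z^p = S := by
    rw [hz, ← Real.rpow_natCast (S ^ ((1:ℝ)/(p:ℝ))) p, ← Real.rpow_mul hS0.le,
      one_div, inv_mul_cancel₀ (by positivity), Real.rpow_one]
  have hheadp : y0^p * S * (1+ε)^p ≤ x0^p := by
    have h1 : (y0*z*(1+ε))^p ≤ x0^p :=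
      pow_le_pow_left₀ (by positivity) hhead p
    calc y0^p * S * (1+ε)^p = (y0*z*(1+ε))^p := by rw [← hzp, mul_pow, mul_pow]
      _ ≤ x0^p := h1
  have hheadΦ : S*Φ0 ≤ m*Ψ0 := by
    have h1 : Φ0 ≤ (y0^p*S*(1+ε)^p)⁻¹ := by
      rw [hΦ0def, inv_pow]
      exact inv_anti₀ (by positivity) hheadp
    have h2 : S*(y0^p*S*(1+ε)^p)⁻¹ = m*Ψ0 := by
      rw [hm, hΨ0def, inv_pow, inv_pow]
      field_simp
    calc S*Φ0 ≤ S*(y0^p*S*(1+ε)^p)⁻¹ := mul_le_mul_of_nonneg_left h1 hS0.le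
      _ = m*Ψ0 := h2
  -- conclude Ψ T ≥ δ Ψ0
  have hΨT : δ*Ψ0 ≤ ((y T)⁻¹)^p := by
    have h1 := hsum2 T
    rw [hs2, hΨ00] at h1
    have h2 : (p:ℝ)*η*S*B ≤ S*Φ0 + S*((T:ℝ)*E) := by
      have h3 := mul_le_mul_of_nonneg_left key1 hS0.le
      have e : S*((p:ℝ)*η*B - (T:ℝ)*E) = (p:ℝ)*η*S*B - S*((T:ℝ)*E) := by ring
      rw [e] at h3
      linarith only [h3]
    have hmδ : m = 1 - 2*δ := by rw [hδ]; ring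
    rw [hmδ] at hheadΦ
    linarith only [h1, h2, hheadΦ, hSTE]
  -- final conversion
  have hyT := hypos T
  have hK1 : (1:ℝ) ≤ 1/δ := by
    rw [le_div_iff₀ hδ0]; linarith
  have hyTp : (y T)^p ≤ ((1/δ)*y0)^p := by
    have h1 : (y T)^p ≤ (δ*Ψ0)⁻¹ := by
      rw [inv_pow] at hΨT
      have := inv_anti₀ (by positivity) hΨT
      rwa [inv_inv] at this
    have h2 : (δ*Ψ0)⁻¹ = (1/δ)*y0^p := by
      rw [hΨ0def, inv_pow]
      field_simp
    have h3 : (1/δ)*y0^p ≤ ((1/δ)*y0)^p := by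
      rw [mul_pow]
      have h4 : (1/δ) ≤ (1/δ)^p := le_self_pow₀ hK1 (by omega)
      exact mul_le_mul_of_nonneg_right h4 (by positivity)
    linarith only [h1, h2, h3]
  have := pow_le_pow_left₀ (hypos T).le (le_refl (y T)) p
  have hfinal : y T ≤ (1/δ)*y0 :=
    le_of_pow_le_pow_left₀ (by omega) (by positivity) hyTp
  rw [hyinit]
  exact hfinal
end
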